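/- arXiv:2407.17367 — 7 statements merged into one kernel-verified Lean document; each statement's English description precedes it below -/
import Mathlib

section
/- For any string s ∈ Σ^n, Δ(ICR₁(s)) = ICR₀(Δ(s)); that is, taking the difference array of the incremented-cycle-register image of s equals cyclically rotating the difference array of s by one position. -/
def delta {n k : ℕ} (hn : 0 < n) (s : Fin n → ZMod k) : Fin n → ZMod k :=
  fun i => s ⟨(i.val + n - 1) % n, Nat.mod_lt _ hn⟩ - s i - (if i.val = 0 then 1 else 0)

/-- `ICR_m`: cyclic left rotation with the wrapped-around symbol incremented by `m`. -/
def icr {n k : ℕ} (hn : 0 < n) (m : ZMod k) (s : Fin n → ZMod k) : Fin n → ZMod k :=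
  fun i => if h : i.val + 1 < n then s ⟨i.val + 1, h⟩ else s ⟨0, hn⟩ + m

private lemma mod_aux {i n : ℕ} (h : 0 < i) (h2 : i ≤ n) : (i + n - 1) % n = i - 1 := by
  rw [show i + n - 1 = (i - 1) + n by omega, Nat.add_mod_right,
    Nat.mod_eq_of_lt (by omega)]

theorem stmt1 {n k : ℕ} (hn : 0 < n) (hk : 2 ≤ k) (s : Fin n → ZMod k) :
    delta hn (icr hn 1 s) = icr hn 0 (delta hn s) := by
  funext i
  by_cases h0 : i.val = 0
  · by_cases h1 : i.val + 1 < n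
    · -- i = 0, n ≥ 2
      simp only [delta, icr, h0]
      have hn2 : 2 ≤ n := by omega
      have cond1 : ¬ ((0 + n - 1) % n + 1 < n) := by
        rw [Nat.mod_eq_of_lt (by omega)]; omega
      have h1' : 0 + 1 < n := by omega
      rw [dif_neg cond1, dif_pos h1', dif_pos h1']
      have e1 : (⟨(0 + 1 + n - 1) % n, Nat.mod_lt _ hn⟩ : Fin n) = ⟨0, hn⟩ :=
        Fin.ext (by simp only; rw [show 0 + 1 + n - 1 = 0 + n by omega, Nat.add_mod_right,
          Nat.mod_eq_of_lt (by omega)])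
      rw [e1]
      norm_num
      ring
    · -- n = 1, i = 0
      have hn1 : n = 1 := by omega
      subst hn1
      simp only [delta, icr]
      norm_num
  · by_cases h1 : i.val + 1 < n
    · -- 0 < i, i + 1 < n
      simp only [delta, icr]
      have cond1 : (i.val + n - 1) % n + 1 < n := by
        rw [mod_aux (by omega) (by omega)]; omega
      rw [dif_pos cond1, dif_pos h1, dif_pos h1]
      simp only [if_neg h0, if_neg (by omega : ¬ (i.val + 1 = 0))]
      have e1 : (⟨(i.val + n - 1) % n + 1, cond1⟩ : Fin n)
          = ⟨(i.val + 1 + n - 1) % n, Nat.mod_lt _ hn⟩ :=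
        Fin.ext (by simp only; rw [mod_aux (by omega) (by omega),
          mod_aux (by omega) (by omega : i.val + 1 ≤ n)]; omega)
      rw [e1]
    · -- i = n - 1, n ≥ 2
      simp only [delta, icr]
      have cond1 : (i.val + n - 1) % n + 1 < n := by
        rw [mod_aux (by omega) (by omega)]; omega
      rw [dif_pos cond1, dif_neg h1, dif_neg h1]
      simp only [if_neg h0, if_pos rfl]
      have e1 : (⟨(i.val + n - 1) % n + 1, cond1⟩ : Fin n)
          = ⟨(0 + n - 1) % n, Nat.mod_lt _ hn⟩ :=
        Fin.ext (by simp only; rw [mod_aux (by omega) (by omega),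
          Nat.mod_eq_of_lt (by omega)]; omega)
      rw [e1]
      simp only [if_true]
      ring
end

section
/- If s, t ∈ Σ^n have difference arrays equal up to cyclic rotation, then t = ICR₁^j(s) for some integer j ≥ 0, i.e., s and t lie in the same ICR₁-orbit. -/
lemma icr_iter_apply {n k : ℕ} (hn : 0 < n) (s : Fin n → ZMod k) (j : ℕ) (i : Fin n) :
    (icr hn 1)^[j] s i
      = s ⟨(i.val + j) % n, Nat.mod_lt _ hn⟩ + ((i.val + j) / n : ℕ) := by
  induction j generalizing i with
  | zero =>
      simp [Nat.mod_eq_of_lt i.isLt, Nat.div_eq_of_lt i.isLt]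
  | succ j ih =>
      rw [Function.iterate_succ_apply']
      have hst : icr hn 1 ((icr hn 1)^[j] s) i
          = if h : i.val + 1 < n then (icr hn 1)^[j] s ⟨i.val + 1, h⟩
            else (icr hn 1)^[j] s ⟨0, hn⟩ + 1 := rfl
      rw [hst]
      by_cases hlt : i.val + 1 < n
      · rw [dif_pos hlt, ih ⟨i.val + 1, hlt⟩]
        have : i.val + 1 + j = i.val + (j + 1) := by ring
        simp [this]
      · rw [dif_neg hlt, ih ⟨0, hn⟩]
        have hidx : i.val + (j + 1) = n + j := by
          have := i.isLt; omega
        rw [hidx]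
        have h1 : (n + j) % n = j % n := Nat.add_mod_left n j
        have h2 : (n + j) / n = j / n + 1 := by
          rw [Nat.add_comm n j, Nat.add_div_right _ hn]
        simp only [h1, h2, Nat.zero_add]
        push_cast
        ring

lemma delta_icr {n k : ℕ} (hn : 0 < n) (s : Fin n → ZMod k) (i : Fin n) :
    delta hn (icr hn 1 s) i = delta hn s ⟨(i.val + 1) % n, Nat.mod_lt _ hn⟩ := by
  obtain ⟨m, hi⟩ := i
  simp only [delta, icr]
  rcases Nat.eq_zero_or_pos m with h0 | h0
  · -- m = 0
    subst h0
    have hp : (0 + n - 1) % n = n - 1 := by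
      rw [Nat.zero_add]; exact Nat.mod_eq_of_lt (by omega)
    by_cases h1 : n = 1
    · subst h1
      simp only [Nat.mod_one, hp]
      norm_num
    · -- n ≥ 2
      have hq : (0 + 1) % n = 1 := by
        rw [Nat.zero_add]; exact Nat.mod_eq_of_lt (by omega)
      have hr : (1 + n - 1) % n = 0 := by
        have : 1 + n - 1 = n := by omega
        rw [this, Nat.mod_self]
      simp only [hp, hq, hr]
      rw [dif_neg (by omega), dif_pos (by omega : 0 + 1 < n),
        if_neg (by omega : ¬ (1 = 0))]
      simp only [Nat.zero_add, if_true]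
      ring
  · -- m > 0
    have hp : (m + n - 1) % n = m - 1 := by
      have : m + n - 1 = (m - 1) + n := by omega
      rw [this, Nat.add_mod_right]
      exact Nat.mod_eq_of_lt (by omega)
    by_cases hlt : m + 1 < n
    · have hq : (m + 1) % n = m + 1 := Nat.mod_eq_of_lt hlt
      have hr : (m + 1 + n - 1) % n = m := by
        have : m + 1 + n - 1 = m + n := by omega
        rw [this, Nat.add_mod_right]
        exact Nat.mod_eq_of_lt hi
      simp only [hp, hq, hr]
      rw [dif_pos (by omega : m - 1 + 1 < n), dif_pos hlt,
        if_neg (by omega : ¬ m = 0), if_neg (by omega : ¬ (m + 1 = 0))]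
      have : m - 1 + 1 = m := by omega
      simp only [this]
    · -- m + 1 = n, m > 0
      have hq : (m + 1) % n = 0 := by
        have : m + 1 = n := by omega
        rw [this, Nat.mod_self]
      have hr : (0 + n - 1) % n = m := by
        have : 0 + n - 1 = m := by omega
        rw [this]; exact Nat.mod_eq_of_lt hi
      simp only [hp, hq, hr]
      rw [dif_pos (by omega : m - 1 + 1 < n), dif_neg hlt,
        if_neg (by omega : ¬ m = 0)]
      have : m - 1 + 1 = m := by omega
      simp only [this, if_true]
      ring

lemma delta_iter {n k : ℕ} (hn : 0 < n) (r : ℕ) (s : Fin n → ZMod k) (i : Fin n) :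
    delta hn ((icr hn 1)^[r] s) i = delta hn s ⟨(i.val + r) % n, Nat.mod_lt _ hn⟩ := by
  induction r generalizing s with
  | zero => simp [Nat.mod_eq_of_lt i.isLt]
  | succ r ih =>
      rw [Function.iterate_succ_apply, ih (icr hn 1 s), delta_icr]
      congr 1
      apply Fin.ext
      show ((i.val + r) % n + 1) % n = (i.val + (r + 1)) % n
      rw [Nat.mod_add_mod, Nat.add_assoc]

theorem stmt3 {n k : ℕ} (hn : 0 < n) (hk : 2 ≤ k) (s t : Fin n → ZMod k)
    (h : ∃ r : ℕ, ∀ i : Fin n,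
      delta hn t i = delta hn s ⟨(i.val + r) % n, Nat.mod_lt _ hn⟩) :
    ∃ j : ℕ, t = (icr hn (1 : ZMod k))^[j] s := by
  haveI : NeZero k := ⟨by omega⟩
  obtain ⟨r, hr⟩ := h
  set u : Fin n → ZMod k := (icr hn 1)^[r] s with hu
  have hdu : ∀ i, delta hn t i = delta hn u i := by
    intro i
    rw [hr i, hu, delta_iter]
  set c : ZMod k := t ⟨0, hn⟩ - u ⟨0, hn⟩ with hc
  have hrec : ∀ m (hm : m < n), t ⟨m, hm⟩ = u ⟨m, hm⟩ + c := by
    intro m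
    induction m with
    | zero => intro hm; rw [hc]; ring
    | succ m ih =>
        intro hm
        have hmn : m < n := by omega
        have hd := hdu ⟨m + 1, hm⟩
        simp only [delta] at hd
        have hidx : (m + 1 + n - 1) % n = m := by
          have : m + 1 + n - 1 = m + n := by omega
          rw [this, Nat.add_mod_right]
          exact Nat.mod_eq_of_lt hmn
        simp only [hidx, if_neg (Nat.succ_ne_zero m)] at hd
        have hih := ih hmn
        linear_combination hih - hd
  refine ⟨c.val * n + r, ?_⟩
  funext i
  have h1 := icr_iter_apply hn s (c.val * n + r) i
  have h2 := icr_iter_apply hn s r i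
  have hrec' := hrec i.val i.isLt
  have hmod : (i.val + (c.val * n + r)) % n = (i.val + r) % n := by
    rw [show i.val + (c.val * n + r) = (i.val + r) + c.val * n by ring,
      Nat.add_mul_mod_self_right]
  have hdiv : (i.val + (c.val * n + r)) / n = (i.val + r) / n + c.val := by
    rw [show i.val + (c.val * n + r) = (i.val + r) + c.val * n by ring,
      Nat.add_mul_div_right _ _ hn]
  rw [h1]
  simp only [hmod, hdiv]
  push_cast
  rw [ZMod.natCast_val, ZMod.cast_id]
  have hfin : t ⟨i.val, i.isLt⟩ = u ⟨i.val, i.isLt⟩ + c := hrec'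
  simp only [Fin.eta] at hfin
  rw [hu, h2] at hfin
  linear_combination hfin
end

section
/- If s, t ∈ Σ^n share at least one common symbol (there exists a ∈ Σ occurring in both s and t), then D(P(H(s) − H(t))) ≤ n − 1. -/
/-!
Between two positions `j < i` the difference of partial sums is the sum of `H(s) − H(t)` over the
block `A = (j, i]`, that is `|s|_A − |t|_A` up to sign. If the common symbol `a` lies in `A`,
the subtracted count is at least `1`; otherwise the positive count misses the occurrence of `a`
and is at most `n − 1`. Either way the difference is at most `n − 1`.
-/

def hist {n k : ℕ} (s : Fin n → Fin k) : Fin k → ℤ :=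
  fun c => ((Finset.univ.filter (fun i => s i = c)).card : ℤ)

def psum {k : ℕ} (H : Fin k → ℤ) : Fin k → ℤ :=
  fun i => ∑ j ∈ Finset.Iic i, H j

open Finset

section Histogram

variable {n k : ℕ} (s t : Fin n → Fin k)

lemma hist_nonneg (c : Fin k) : 0 ≤ hist s c :=
  Int.natCast_nonneg _

lemma one_le_hist_apply (i : Fin n) : 1 ≤ hist s (s i) := by
  have : 0 < (univ.filter fun j => s j = s i).card := card_pos.mpr ⟨i, by simp⟩
  rw [hist]
  exact_mod_cast this

lemma sum_hist_univ : ∑ c, hist s c = n := by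
  have := card_eq_sum_card_fiberwise (s := univ) (t := univ) fun i _ => mem_univ (s i)
  simp only [hist]
  exact_mod_cast by simpa using this.symm

lemma sum_hist_le (A : Finset (Fin k)) : ∑ c ∈ A, hist s c ≤ n :=
  sum_hist_univ s ▸ sum_le_sum_of_subset_of_nonneg (subset_univ A) fun c _ _ => hist_nonneg s c

lemma sum_hist_sub_sum_hist_le {a : Fin k} (hs : 1 ≤ hist s a) (ht : 1 ≤ hist t a)
    (A : Finset (Fin k)) : ∑ c ∈ A, hist s c - ∑ c ∈ A, hist t c ≤ n - 1 := by
  by_cases ha : a ∈ A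
  · have := single_le_sum (fun c _ => hist_nonneg t c) ha
    linarith [sum_hist_le s A]
  · have := sum_hist_le s (insert a A)
    rw [sum_insert ha] at this
    linarith [sum_nonneg fun c (_ : c ∈ A) => hist_nonneg t c]

end Histogram

lemma psum_sub_psum_of_le {k : ℕ} (H : Fin k → ℤ) {i j : Fin k} (hji : j ≤ i) :
    psum H i - psum H j = ∑ c ∈ Ioc j i, H c := by
  rw [psum, psum, ← Iic_union_Ioc_eq_Iic hji, sum_union (Iic_disjoint_Ioc le_rfl)]
  ring

theorem stmt7_general {n k : ℕ} (s t : Fin n → Fin k)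
    (h : ∃ a : Fin k, (∃ i, s i = a) ∧ (∃ j, t j = a)) :
    ∀ i j : Fin k,
      psum (fun c => hist s c - hist t c) i -
      psum (fun c => hist s c - hist t c) j ≤ (n : ℤ) - 1 := by
  obtain ⟨a, ⟨i₀, rfl⟩, ⟨j₀, hj₀⟩⟩ := h
  have hs := one_le_hist_apply s i₀
  have ht : 1 ≤ hist t (s i₀) := hj₀ ▸ one_le_hist_apply t j₀
  intro i j
  rcases le_total j i with hji | hij
  · rw [psum_sub_psum_of_le _ hji, sum_sub_distrib]
    exact sum_hist_sub_sum_hist_le s t hs ht _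
  · rw [← neg_sub, psum_sub_psum_of_le _ hij, sum_sub_distrib, neg_sub]
    exact sum_hist_sub_sum_hist_le t s ht hs _

theorem stmt7 {n k : ℕ} (hk : 2 ≤ k) (hn : 1 ≤ n) (s t : Fin n → Fin k)
    (h : ∃ a : Fin k, (∃ i, s i = a) ∧ (∃ j, t j = a)) :
    ∀ i j : Fin k,
      psum (fun c => hist s c - hist t c) i -
      psum (fun c => hist s c - hist t c) j ≤ (n : ℤ) - 1 :=
  stmt7_general s t h
end

section
/- Let d : Σ^n → Σ be any depth assignment. Let (s,t) be a valid arc with t[0..n−2] = s[1..n−1] (the arc lies in the de Bruijn graph), i.e., setting b = s[0] and c = t[n−1], either (b+1 = c and d(s) = d(t)) or (b+1 = d(t) and c = d(s)). Then e_b ≡ P(H(s) + e_{d(s)}) − P(H(t) + e_{d(t)}) modulo the constant function K. -/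
def ind {k : ℕ} (b : Fin k) : Fin k → ℤ :=
  fun c => if c = b then 1 else 0

lemma psum_ind {k : ℕ} (a x : Fin k) : psum (ind a) x = if a ≤ x then 1 else 0 := by
  unfold psum ind
  rw [Finset.sum_ite_eq' (Finset.Iic x) a (fun _ => (1:ℤ))]
  simp [Finset.mem_Iic]

lemma key {k : ℕ} (hk : 2 ≤ k) (b x : Fin k) :
    (if x = b then (1:ℤ) else 0) - (if b ≤ x then (1:ℤ) else 0)
      + (if b + ⟨1, by omega⟩ ≤ x then (1:ℤ) else 0)
      = if b.val + 1 = k then 1 else 0 := by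
  have hb := b.isLt
  have hx := x.isLt
  have h1v : ((⟨1, by omega⟩ : Fin k)).val = 1 := rfl
  by_cases h : b.val + 1 = k
  · have hv : (b + (⟨1, by omega⟩ : Fin k)).val = 0 := by
      rw [Fin.val_add, h1v, h, Nat.mod_self]
    simp only [Fin.le_def, Fin.ext_iff, hv, if_pos h]
    split_ifs <;> omega
  · have hv : (b + (⟨1, by omega⟩ : Fin k)).val = b.val + 1 := by
      rw [Fin.val_add, h1v]
      exact Nat.mod_eq_of_lt (by omega)
    simp only [Fin.le_def, Fin.ext_iff, hv, if_neg h]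
    split_ifs <;> omega

theorem stmt11 {n k : ℕ} (hn : 0 < n) (hk : 2 ≤ k)
    (d : (Fin n → Fin k) → Fin k) (s t : Fin n → Fin k)
    -- (s,t) is an arc of the de Bruijn graph:
    (harc : ∀ i : ℕ, (h : i + 1 < n) → t ⟨i, by omega⟩ = s ⟨i + 1, h⟩)
    -- (s,t) is a valid arc (arithmetic on symbols is mod k):
    (hvalid :
      (s ⟨0, hn⟩ + ⟨1, by omega⟩ = t ⟨n - 1, by omega⟩ ∧ d s = d t) ∨
      (s ⟨0, hn⟩ + ⟨1, by omega⟩ = d t ∧ t ⟨n - 1, by omega⟩ = d s)) :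
    ∃ m : ℤ, ∀ x : Fin k,
      ind (s ⟨0, hn⟩) x -
        (psum (fun c => hist s c + ind (d s) c) x -
         psum (fun c => hist t c + ind (d t) c) x) = m := by
  obtain ⟨N, rfl⟩ : ∃ N, n = N + 1 := ⟨n - 1, by omega⟩
  set b : Fin k := s ⟨0, hn⟩ with hbdef
  set c0 : Fin k := t ⟨N, by omega⟩ with hc0def
  have hsum : ∀ (u : Fin (N+1) → Fin k) (c : Fin k),
      hist u c = ∑ i, (if u i = c then (1:ℤ) else 0) := by
    intro u c
    unfold hist
    rw [Finset.card_filter]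
    push_cast
    rfl
  have hhist : ∀ c, hist t c - hist s c = ind c0 c - ind b c := by
    intro c
    rw [hsum t c, hsum s c, Fin.sum_univ_castSucc, Fin.sum_univ_succ]
    have h1 : ∀ i : Fin N, t i.castSucc = s i.succ := fun i => harc i.val (by omega)
    have h0 : s (0 : Fin (N+1)) = b := rfl
    have h2 : t (Fin.last N) = c0 := rfl
    simp only [h1, h0, h2]
    have e1 : (if c0 = c then (1:ℤ) else 0) = ind c0 c := by
      unfold ind; simp [eq_comm]
    have e2 : (if b = c then (1:ℤ) else 0) = ind b c := by
      unfold ind; simp [eq_comm]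
    rw [e1, e2]
    ring
  have hpsum : ∀ x : Fin k,
      psum (fun c => hist s c + ind (d s) c) x -
        psum (fun c => hist t c + ind (d t) c) x
      = (if b ≤ x then (1:ℤ) else 0) - (if c0 ≤ x then 1 else 0)
        + (if d s ≤ x then 1 else 0) - (if d t ≤ x then 1 else 0) := by
    intro x
    unfold psum
    rw [← Finset.sum_sub_distrib]
    have hterm : ∀ j : Fin k, (hist s j + ind (d s) j) - (hist t j + ind (d t) j)
        = ((ind b j - ind c0 j) + ind (d s) j) - ind (d t) j := by
      intro j
      have := hhist j
      linarith
    rw [Finset.sum_congr rfl (fun j _ => hterm j)]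
    have e : ∀ a : Fin k, ∑ j ∈ Finset.Iic x, ind a j = if a ≤ x then (1:ℤ) else 0 :=
      fun a => psum_ind a x
    rw [Finset.sum_sub_distrib, Finset.sum_add_distrib, Finset.sum_sub_distrib,
      e b, e c0, e (d s), e (d t)]
  refine ⟨if b.val + 1 = k then 1 else 0, fun x => ?_⟩
  rw [hpsum x]
  have hkey := key hk b x
  show (if x = b then (1:ℤ) else 0) - _ = _
  rcases hvalid with ⟨h1, h2⟩ | ⟨h1, h2⟩
  · have h1' : c0 = b + ⟨1, by omega⟩ := h1.symm
    rw [h2, h1']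
    linarith
  · have h2' : c0 = d s := h2
    have h1' : d t = b + ⟨1, by omega⟩ := h1.symm
    rw [h2', h1']
    linarith
end

section
/- For s, t ∈ Σ^n and depth assignment d : Σ^n → Σ, if d(s) = d(t) or s and t share at least one symbol, then D(P(H(s) + e_{d(s)}) − P(H(t) + e_{d(t)})) ≤ n. -/
lemma hist_sum {n k : ℕ} (s : Fin n → Fin k) : ∑ c, hist s c = n := by
  unfold hist
  rw [← Nat.cast_sum]
  norm_cast
  rw [← Finset.card_eq_sum_card_fiberwise (f := s) (fun x _ => Finset.mem_univ _)]
  simp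

lemma ind_sum {k : ℕ} (b : Fin k) : ∑ c, ind b c = 1 := by
  unfold ind
  simp

lemma key_s13 {k : ℕ} (N : ℤ) (u v : Fin k → ℤ) (hu : ∀ c, 0 ≤ u c) (hv : ∀ c, 0 ≤ v c)
    (hsu : ∑ c, u c = N) (c0 : Fin k) (hm : 1 ≤ min (u c0) (v c0)) (i j : Fin k) (hij : j ≤ i) :
    (∑ c ∈ Finset.Iic i, (u c - v c)) - (∑ c ∈ Finset.Iic j, (u c - v c)) ≤ N - 1 := by
  rw [← Finset.sum_sdiff_eq_sub (Finset.Iic_subset_Iic.2 hij)]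
  have h1 : (∑ c ∈ Finset.Iic i \ Finset.Iic j, (u c - v c)) ≤
      ∑ c ∈ Finset.Iic i \ Finset.Iic j, (u c - min (u c) (v c)) := by
    apply Finset.sum_le_sum
    intro c _
    have := min_le_right (u c) (v c)
    omega
  have h2 : (∑ c ∈ Finset.Iic i \ Finset.Iic j, (u c - min (u c) (v c))) ≤
      ∑ c, (u c - min (u c) (v c)) := by
    apply Finset.sum_le_sum_of_subset_of_nonneg (Finset.subset_univ _)
    intro c _ _
    have := min_le_left (u c) (v c)
    omega
  have h3 : ∑ c, (u c - min (u c) (v c)) = N - ∑ c, min (u c) (v c) := by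
    rw [Finset.sum_sub_distrib, hsu]
  have h4 : (1 : ℤ) ≤ ∑ c, min (u c) (v c) := by
    calc (1:ℤ) ≤ min (u c0) (v c0) := hm
    _ ≤ ∑ c, min (u c) (v c) := by
        apply Finset.single_le_sum (f := fun c => min (u c) (v c)) _ (Finset.mem_univ c0)
        intro c _
        exact le_min (hu c) (hv c)
  omega

theorem stmt13 {n k : ℕ} (hn : 1 ≤ n) (hk : 2 ≤ k)
    (d : (Fin n → Fin k) → Fin k) (s t : Fin n → Fin k)
    (h : d s = d t ∨ ∃ a : Fin k, (∃ i, s i = a) ∧ (∃ j, t j = a)) :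
    ∀ i j : Fin k,
      (psum (fun c => hist s c + ind (d s) c) i -
       psum (fun c => hist t c + ind (d t) c) i) -
      (psum (fun c => hist s c + ind (d s) c) j -
       psum (fun c => hist t c + ind (d t) c) j) ≤ (n : ℤ) := by
  intro i j
  set u : Fin k → ℤ := fun c => hist s c + ind (d s) c with hudef
  set v : Fin k → ℤ := fun c => hist t c + ind (d t) c with hvdef
  have hu : ∀ c, 0 ≤ u c := by
    intro c; simp only [hudef, hist, ind]; positivity
  have hv : ∀ c, 0 ≤ v c := by
    intro c; simp only [hvdef, hist, ind]; positivity
  have hsu : ∑ c, u c = (n : ℤ) + 1 := by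
    simp only [hudef, Finset.sum_add_distrib, hist_sum, ind_sum]
  have hsv : ∑ c, v c = (n : ℤ) + 1 := by
    simp only [hvdef, Finset.sum_add_distrib, hist_sum, ind_sum]
  have histpos : ∀ (w : Fin n → Fin k) (a : Fin k), (∃ i, w i = a) → 1 ≤ hist w a := by
    intro w a ⟨i0, hi0⟩
    unfold hist
    have : i0 ∈ Finset.univ.filter (fun i => w i = a) := by simp [hi0]
    have := Finset.card_pos.2 ⟨i0, this⟩
    omega
  obtain ⟨c0, hm⟩ : ∃ c0, 1 ≤ min (u c0) (v c0) := by
    rcases h with heq | ⟨a, hsa, hta⟩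
    · refine ⟨d s, ?_⟩
      have h1 : 1 ≤ ind (d s) (d s) := by simp [ind]
      have h2 : 1 ≤ ind (d t) (d s) := by simp [ind, heq]
      have h3 : 0 ≤ hist s (d s) := by unfold hist; positivity
      have h4 : 0 ≤ hist t (d s) := by unfold hist; positivity
      simp only [hudef, hvdef]
      omega
    · refine ⟨a, ?_⟩
      have h1 := histpos s a hsa
      have h2 := histpos t a hta
      have h3 : 0 ≤ ind (d s) a := by simp only [ind]; positivity
      have h4 : 0 ≤ ind (d t) a := by simp only [ind]; positivity
      simp only [hudef, hvdef]
      omega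
  have hpsum : ∀ (w : Fin k → ℤ) (c : Fin k), psum w c = ∑ x ∈ Finset.Iic c, w x := fun _ _ => rfl
  rcases le_total j i with hij | hij
  · have := key_s13 ((n:ℤ)+1) u v hu hv hsu c0 hm i j hij
    simp only [hpsum, Finset.sum_sub_distrib] at this ⊢
    omega
  · have := key_s13 ((n:ℤ)+1) v u hv hu hsv c0 (by rw [min_comm]; exact hm) j i hij
    simp only [hpsum, Finset.sum_sub_distrib] at this ⊢
    omega
end

section
/- In the ICR₁-orbit partition of Σ^n, the orbit of 0^n consists exactly of the strings whose difference array is a cyclic rotation of the array (−1, 0, 0, …, 0); equivalently, s is in the orbit of 0^n iff Δ(s) has n−1 zero entries. -/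
lemma f_formula {n k : ℕ} (hn : 0 < n) (j : ℕ) (i : Fin n) :
    (icr hn (1 : ZMod k))^[j] (fun _ => 0) i = (((j + i.val) / n : ℕ) : ZMod k) := by
  induction j generalizing i with
  | zero => simp [Nat.div_eq_of_lt i.isLt]
  | succ j ih =>
    rw [Function.iterate_succ_apply']
    simp only [icr]
    by_cases h : i.val + 1 < n
    · rw [dif_pos h, ih ⟨i.val + 1, h⟩]
      have : j + (⟨i.val + 1, h⟩ : Fin n).val = j + 1 + i.val := by simp; omega
      rw [this]
    · rw [dif_neg h, ih ⟨0, hn⟩]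
      have hi : i.val = n - 1 := by omega
      have h2 : j + 1 + i.val = (j + (⟨0, hn⟩ : Fin n).val) + n := by simp; omega
      rw [h2, Nat.add_div_right _ hn]
      push_cast
      ring

lemma zdivHelper {n : ℕ} (hn : 0 < n) (a b : ℕ) (hb : b < n) : (n * a + b) / n = a := by
  rw [Nat.mul_add_div hn, Nat.div_eq_of_lt hb, add_zero]

lemma delta_f {n k : ℕ} (hn : 0 < n) (j : ℕ) (i : Fin n) :
    delta hn ((icr hn (1 : ZMod k))^[j] (fun _ => 0)) i =
      if (j + i.val) % n = 0 then -1 else 0 := by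
  have hq := Nat.div_add_mod j n
  have hrlt : j % n < n := Nat.mod_lt _ hn
  unfold delta
  rw [f_formula, f_formula]
  simp only [Fin.val_mk]
  by_cases hi : i.val = 0
  · rw [if_pos hi]
    simp only [hi]
    have hprev : (0 + n - 1) % n = n - 1 := by
      rw [Nat.zero_add]
      exact Nat.mod_eq_of_lt (by omega)
    rw [hprev]
    by_cases hr : j % n = 0
    · rw [if_pos (by simpa using hr)]
      have e1 : j + (n - 1) = n * (j / n) + (n - 1) := by omega
      have e2 : (j + (n - 1)) / n = j / n := by
        rw [e1]; exact zdivHelper hn _ _ (by omega)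
      rw [e2]
      ring
    · rw [if_neg (by simpa using hr)]
      have hms : n * (j / n + 1) = n * (j / n) + n := Nat.mul_succ n (j / n)
      have e1 : j + (n - 1) = n * (j / n + 1) + (j % n - 1) := by omega
      have e2 : (j + (n - 1)) / n = j / n + 1 := by
        rw [e1]; exact zdivHelper hn _ _ (by omega)
      rw [e2]
      push_cast
      ring
  · rw [if_neg hi]
    have hm : 0 < i.val := Nat.pos_of_ne_zero hi
    have hprev : (i.val + n - 1) % n = i.val - 1 := by
      have h' : i.val + n - 1 = (i.val - 1) + n := by omega
      rw [h', Nat.add_mod_right, Nat.mod_eq_of_lt (by omega)]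
    rw [hprev]
    have hq2 := Nat.div_add_mod (j + i.val) n
    have hr2lt : (j + i.val) % n < n := Nat.mod_lt _ hn
    by_cases hr : (j + i.val) % n = 0
    · rw [if_pos hr]
      set t := (j + i.val) / n with ht
      have htpos : 1 ≤ t := by
        rcases Nat.eq_zero_or_pos t with h0 | h1
        · rw [h0] at hq2; omega
        · exact h1
      have hms : n * (t - 1) + n = n * t := by
        rw [← Nat.mul_succ]
        congr 1
        omega
      have e1 : j + (i.val - 1) = n * (t - 1) + (n - 1) := by omega
      have e2 : (j + (i.val - 1)) / n = t - 1 := by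
        rw [e1]; exact zdivHelper hn _ _ (by omega)
      rw [e2]
      have h3 : t = (t - 1) + 1 := by omega
      rw [h3]
      push_cast
      ring
    · rw [if_neg hr]
      have e1 : j + (i.val - 1) = n * ((j + i.val) / n) + ((j + i.val) % n - 1) := by omega
      have e2 : (j + (i.val - 1)) / n = (j + i.val) / n := by
        rw [e1]; exact zdivHelper hn _ _ (by omega)
      rw [e2]
      ring

lemma chain {n k : ℕ} (hn : 0 < n) (s : Fin n → ZMod k) (m : ℕ) (h : m < n)
    (H : ∀ i : Fin n, 0 < i.val → i.val ≤ m → delta hn s i = 0) :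
    s ⟨m, h⟩ = s ⟨0, hn⟩ := by
  induction m with
  | zero => rfl
  | succ m ih =>
    have hd := H ⟨m + 1, h⟩ (by simp) (le_refl _)
    unfold delta at hd
    simp only [Fin.val_mk] at hd
    have hidx : (m + 1 + n - 1) % n = m := by
      have : m + 1 + n - 1 = m + n := by omega
      rw [this, Nat.add_mod_right, Nat.mod_eq_of_lt (by omega)]
    simp only [hidx, if_neg (Nat.succ_ne_zero m)] at hd
    rw [sub_zero, sub_eq_zero] at hd
    rw [← hd]
    exact ih (by omega) (fun i h1 h2 => H i h1 (by omega))

lemma chain2 {n k : ℕ} (hn : 0 < n) (s : Fin n → ZMod k) (p : Fin n) (m : ℕ) (h : m < n)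
    (hpm : p.val ≤ m) (H : ∀ i : Fin n, p.val < i.val → delta hn s i = 0) :
    s ⟨m, h⟩ = s p := by
  induction m with
  | zero =>
    have : p = ⟨0, h⟩ := Fin.ext (by simp only [Fin.val_mk]; omega)
    rw [this]
  | succ m ih =>
    by_cases hp : p.val = m + 1
    · have : p = ⟨m + 1, h⟩ := Fin.ext hp
      rw [this]
    · have hd := H ⟨m + 1, h⟩ (by simp; omega)
      unfold delta at hd
      simp only [Fin.val_mk] at hd
      have hidx : (m + 1 + n - 1) % n = m := by
        have : m + 1 + n - 1 = m + n := by omega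
        rw [this, Nat.add_mod_right, Nat.mod_eq_of_lt (by omega)]
      simp only [hidx, if_neg (Nat.succ_ne_zero m)] at hd
      rw [sub_zero, sub_eq_zero] at hd
      rw [← hd]
      exact ih (by omega) (by omega)

theorem stmt17 {n k : ℕ} (hn : 0 < n) (hk : 2 ≤ k) (s : Fin n → ZMod k) :
    (∃ j : ℕ, s = (icr hn (1 : ZMod k))^[j] (fun _ => 0)) ↔
    (Finset.univ.filter (fun i => delta hn s i = 0)).card = n - 1 := by
  haveI : NeZero k := ⟨by omega⟩
  haveI : Fact (1 < k) := ⟨by omega⟩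
  constructor
  · rintro ⟨j, rfl⟩
    have hne : (-1 : ZMod k) ≠ 0 := by simp
    have hrlt : j % n < n := Nat.mod_lt _ hn
    have hiff : ∀ i : Fin n, (j + i.val) % n = 0 ↔ i.val = (n - j % n) % n := by
      intro i
      rw [← Nat.mod_add_mod]
      constructor
      · intro h
        obtain ⟨c, hc⟩ := Nat.dvd_of_mod_eq_zero h
        have hc2 : c < 2 := by
          by_contra hcc
          push_neg at hcc
          have : n * 2 ≤ n * c := Nat.mul_le_mul_left n hcc
          have hb := i.isLt
          omega
        by_cases hr : j % n = 0
        · rw [hr, Nat.sub_zero, Nat.mod_self]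
          interval_cases c <;> omega
        · rw [Nat.mod_eq_of_lt (by omega)]
          interval_cases c <;> omega
      · intro h
        by_cases hr : j % n = 0
        · rw [hr, Nat.sub_zero, Nat.mod_self] at h
          rw [hr, h]
          simp
        · rw [Nat.mod_eq_of_lt (by omega)] at h
          rw [h]
          have : j % n + (n - j % n) = n := by omega
          rw [this, Nat.mod_self]
    have hfe : Finset.univ.filter (fun i => delta hn ((icr hn (1 : ZMod k))^[j] (fun _ => 0)) i = 0)
        = Finset.univ.filter (fun i : Fin n => ¬ i.val = (n - j % n) % n) := by
      ext i
      simp only [Finset.mem_filter, Finset.mem_univ, true_and, delta_f hn j i]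
      rw [← hiff i]
      by_cases h : (j + i.val) % n = 0 <;> simp [h, hne]
    rw [hfe]
    have hsing : Finset.univ.filter (fun i : Fin n => i.val = (n - j % n) % n)
        = {⟨(n - j % n) % n, Nat.mod_lt _ hn⟩} := by
      ext i
      simp [Fin.ext_iff]
    have htot := Finset.card_filter_add_card_filter_not
      (s := (Finset.univ : Finset (Fin n))) (p := fun i : Fin n => i.val = (n - j % n) % n)
    rw [hsing] at htot
    simp only [Finset.card_singleton, Finset.card_univ, Fintype.card_fin] at htot
    omega
  · intro hcard
    have htot := Finset.card_filter_add_card_filter_not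
      (s := (Finset.univ : Finset (Fin n))) (p := fun i : Fin n => delta hn s i = 0)
    simp only [Finset.card_univ, Fintype.card_fin, hcard] at htot
    have hcompl : (Finset.univ.filter (fun i : Fin n => ¬ delta hn s i = 0)).card = 1 := by omega
    obtain ⟨p, hp⟩ := Finset.card_eq_one.mp hcompl
    have hzero : ∀ i : Fin n, i ≠ p → delta hn s i = 0 := by
      intro i hi
      by_contra h
      have : i ∈ ({p} : Finset (Fin n)) := by
        rw [← hp]; simp [h]
      simp at this
      exact hi this
    by_cases hp0 : p.val = 0
    · refine ⟨(s ⟨0, hn⟩).val * n, ?_⟩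
      funext i
      rw [f_formula]
      have hconst : s i = s ⟨0, hn⟩ := by
        have := chain hn s i.val i.isLt (fun i' h1 h2 =>
          hzero i' (by intro he; rw [he] at h1; omega))
        simpa using this
      have e1 : ((s ⟨0, hn⟩).val * n + i.val) / n = (s ⟨0, hn⟩).val := by
        rw [mul_comm, Nat.mul_add_div hn, Nat.div_eq_of_lt i.isLt, add_zero]
      rw [hconst, e1, ZMod.natCast_val, ZMod.cast_id]
    · have hppos : 0 < p.val := Nat.pos_of_ne_zero hp0
      have h0 : delta hn s ⟨0, hn⟩ = 0 := hzero _ (by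
        intro he
        rw [Fin.ext_iff] at he
        simp at he
        omega)
      unfold delta at h0
      have hidx : (0 + n - 1) % n = n - 1 := by
        rw [Nat.zero_add]; exact Nat.mod_eq_of_lt (by omega)
      simp only [Fin.val_mk, hidx, if_pos] at h0
      have hlast : s ⟨n - 1, by omega⟩ = s ⟨0, hn⟩ + 1 := by
        have := h0
        rw [sub_sub, sub_eq_zero] at this
        rw [this]
      have hlow : ∀ i : Fin n, i.val < p.val → s i = s ⟨0, hn⟩ := by
        intro i hip
        have := chain hn s i.val i.isLt (fun i' h1 h2 =>
          hzero i' (by intro he; rw [he] at h2; omega))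
        simpa using this
      have hhigh : ∀ i : Fin n, p.val ≤ i.val → s i = s p := by
        intro i hip
        have := chain2 hn s p i.val i.isLt hip (fun i' h1 =>
          hzero i' (by intro he; rw [he] at h1; omega))
        simpa using this
      have hsp : s p = s ⟨0, hn⟩ + 1 := by
        rw [← hlast]
        exact (hhigh ⟨n - 1, by omega⟩ (by simp; omega)).symm
      refine ⟨(s ⟨0, hn⟩).val * n + (n - p.val), ?_⟩
      funext i
      rw [f_formula]
      by_cases hip : p.val ≤ i.val
      · have e0 : (s ⟨0, hn⟩).val * n + (n - p.val) + i.val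
            = n * ((s ⟨0, hn⟩).val + 1) + (i.val - p.val) := by
          have := i.isLt
          have := p.isLt
          ring_nf
          omega
        have e1 : ((s ⟨0, hn⟩).val * n + (n - p.val) + i.val) / n = (s ⟨0, hn⟩).val + 1 := by
          rw [e0, Nat.mul_add_div hn, Nat.div_eq_of_lt (by have := i.isLt; omega), add_zero]
        rw [hhigh i hip, hsp, e1]
        push_cast
        rw [ZMod.natCast_val, ZMod.cast_id]
      · have e0 : (s ⟨0, hn⟩).val * n + (n - p.val) + i.val
            = n * (s ⟨0, hn⟩).val + (n - p.val + i.val) := by ring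
        have e1 : ((s ⟨0, hn⟩).val * n + (n - p.val) + i.val) / n = (s ⟨0, hn⟩).val := by
          rw [e0, Nat.mul_add_div hn, Nat.div_eq_of_lt (by have := p.isLt; omega), add_zero]
        rw [hlow i (by omega), e1, ZMod.natCast_val, ZMod.cast_id]
end

section
/- For every n ≥ 1 there exists a binary de Bruijn sequence of order n with discrepancy exactly n, and n is the minimum possible discrepancy over all binary de Bruijn sequences of order n. -/
def cnt {N b : ℕ} (hN : 0 < N) (w : Fin N → Fin b) (a : Fin b) (p L : ℕ) : ℕ :=
  ((Finset.range L).filter (fun i => w ⟨(p + i) % N, Nat.mod_lt _ hN⟩ = a)).card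

def isDeBruijn {b n : ℕ} (hN : 0 < b ^ n) (w : Fin (b ^ n) → Fin b) : Prop :=
  ∀ u : Fin n → Fin b, ∃! p : Fin (b ^ n),
    ∀ i : Fin n, w ⟨(p.val + i.val) % b ^ n, Nat.mod_lt _ hN⟩ = u i

/-- Discrepancy of a cyclic binary string: the maximum over cyclic substrings of
the absolute difference between the numbers of ones and zeros. -/
def disc {N : ℕ} (hN : 0 < N) (w : Fin N → Fin 2) : ℕ :=
  Finset.sup (Finset.range N ×ˢ Finset.range (N + 1)) (fun q =>
    ((cnt hN w 1 q.1 q.2 : ℤ) - (cnt hN w 0 q.1 q.2 : ℤ)).natAbs)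

/-!
A de Bruijn sequence of order `n` contains the window `1ⁿ`, so its discrepancy is at least `n`.

For the matching construction, let `ccr` be the complemented cycling register
`(a₀, …, aₘ) ↦ (a₁, …, aₘ, a₀ + 1)` on binary words of length `n = m + 1`. Along a cycle the
potential `maxOnes - ones` (the largest weight on the cycle minus the current weight) lies in
`[0, n]` and moves by `+1` when the output bit `a₀` is `1` and by `-1` when it is `0`. Every cycle
other than that of `1ⁿ` has a word starting with `1` whose head flip lands on a cycle of `maxOnes`
one larger; such a flip changes the potential by exactly the amount needed to keep this rule.
Toggling the heads at one such word per cycle joins all cycles into a single one (a cycle-joining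
along a tree ordered by `maxOnes`), giving a shift register that outputs a de Bruijn sequence whose
window sums are potential differences, hence at most `n`.
-/

open Equiv Finset Function

namespace Equiv.Perm

variable {α : Type*} {p g : Perm α} {u v x y : α}

lemma sameCycle_pow_self_right (p : Perm α) (x : α) (k : ℕ) : p.SameCycle x ((p ^ k) x) :=
  sameCycle_pow_right.2 (SameCycle.refl _ _)

section Fintype

variable [Fintype α] {x₀ : α}

lemma minimalPeriod_eq_card_of_forall_sameCycle (hcyc : ∀ x, p.SameCycle x₀ x) :
    minimalPeriod p x₀ = Fintype.card α := by
  have hpos : 0 < minimalPeriod p x₀ :=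
    minimalPeriod_pos_of_mem_periodicPts (p.injective.mem_periodicPts x₀)
  have hbij : Bijective fun i : Fin (minimalPeriod p x₀) => (p ^ (i : ℕ)) x₀ := by
    refine ⟨fun i j hij => Fin.ext ?_, fun x => ?_⟩
    · simp only [← iterate_eq_pow] at hij
      exact iterate_injOn_Iio_minimalPeriod i.2 j.2 hij
    · obtain ⟨k, rfl⟩ := (hcyc x).exists_nat_pow_eq
      refine ⟨⟨k % minimalPeriod p x₀, Nat.mod_lt _ hpos⟩, ?_⟩
      simp only [← iterate_eq_pow]
      exact iterate_mod_minimalPeriod_eq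
  simpa using Fintype.card_of_bijective hbij

lemma pow_mod_card_apply (hcyc : ∀ x, p.SameCycle x₀ x) (k : ℕ) :
    (p ^ (k % Fintype.card α)) x₀ = (p ^ k) x₀ := by
  rw [← minimalPeriod_eq_card_of_forall_sameCycle hcyc, ← iterate_eq_pow, ← iterate_eq_pow]
  exact iterate_mod_minimalPeriod_eq

end Fintype

variable [Finite α]

lemma sameCycle_mul_iff_of_forall_apply_eq (hg : ∀ y, p.SameCycle x y → g y = y) :
    (p * g).SameCycle x y ↔ p.SameCycle x y := by
  have hpow (k : ℕ) : ((p * g) ^ k) x = (p ^ k) x := by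
    induction k with
    | zero => rfl
    | succ k ih =>
      rw [pow_succ', mul_apply, ih, mul_apply, hg _ (sameCycle_pow_self_right p x k), ← mul_apply,
        ← pow_succ']
  constructor <;> intro h <;> obtain ⟨k, rfl⟩ := h.exists_nat_pow_eq
  · rw [hpow]
    exact sameCycle_pow_self_right p x k
  · rw [← hpow]
    exact sameCycle_pow_self_right _ x k

variable [DecidableEq α]

lemma sameCycle_mul_swap (h : ¬ p.SameCycle u v) : (p * swap u v).SameCycle v u := by
  -- Otherwise the orbit of `v` under `p * swap u v` would follow the `p`-orbit of `p u` forever,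
  -- never meeting `u`; but that `p`-orbit returns to `u`.
  by_contra hvu
  have hreach (k : ℕ) : (p * swap u v).SameCycle v ((p ^ k) (p u)) := by
    induction k with
    | zero => exact ⟨1, by simp [mul_apply]⟩
    | succ k ih =>
      have hu : (p ^ k) (p u) ≠ u := fun he => hvu (by rwa [he] at ih)
      have hv : (p ^ k) (p u) ≠ v := fun he => h (by
        rw [← he]; exact sameCycle_pow_right.2 (sameCycle_apply_right.2 (SameCycle.refl p u)))
      have hstep : (p * swap u v) ((p ^ k) (p u)) = (p ^ (k + 1)) (p u) := by
        rw [mul_apply, swap_apply_of_ne_of_ne hu hv, pow_succ', mul_apply]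
      exact hstep ▸ sameCycle_apply_right.2 ih
  obtain ⟨k, hk⟩ := (sameCycle_apply_left.2 (SameCycle.refl p u)).exists_nat_pow_eq
  have := hreach k
  rw [hk] at this
  exact hvu this

lemma SameCycle.mul_swap (h : ¬ p.SameCycle u v) (hxy : p.SameCycle x y) :
    (p * swap u v).SameCycle x y := by
  have hstep (z : α) : (p * swap u v).SameCycle z (p z) := by
    by_cases hzu : z = u
    · subst hzu
      exact (sameCycle_mul_swap h).symm.trans ⟨1, by simp [mul_apply]⟩
    by_cases hzv : z = v
    · subst hzv
      exact (sameCycle_mul_swap h).trans ⟨1, by simp [mul_apply]⟩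
    exact ⟨1, by simp [mul_apply, swap_apply_of_ne_of_ne hzu hzv]⟩
  obtain ⟨k, rfl⟩ := hxy.exists_nat_pow_eq
  clear hxy
  induction k with
  | zero => exact SameCycle.refl _ _
  | succ k ih =>
    rw [pow_succ', mul_apply]
    exact ih.trans (hstep _)

end Equiv.Perm

namespace Function.Involutive

variable {α : Type*} [DecidableEq α] {ι : α → α}

def toggle (hι : Involutive ι) (S : Finset α) : Perm α :=
  Involutive.toPerm (fun a => if a ∈ S ∨ ι a ∈ S then ι a else a) fun a => by
    by_cases h : a ∈ S ∨ ι a ∈ S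
    · simp only [if_pos h, hι a, if_pos h.symm]
    · simp only [if_neg h]

lemma toggle_apply (hι : Involutive ι) (S : Finset α) (a : α) :
    hι.toggle S a = if a ∈ S ∨ ι a ∈ S then ι a else a := rfl

lemma toggle_empty (hι : Involutive ι) : hι.toggle ∅ = 1 := by
  ext a
  simp [toggle_apply]

lemma toggle_insert (hι : Involutive ι) {S : Finset α} {u : α} (hu : u ∉ S) (hιu : ι u ∉ S) :
    hι.toggle (insert u S) = hι.toggle S * Equiv.swap u (ι u) := by
  ext a
  rw [Perm.mul_apply]
  by_cases hau : a = u
  · subst hau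
    simp [toggle_apply, hu, hιu, hι a]
  by_cases haιu : a = ι u
  · subst haιu
    simp [toggle_apply, hu, hιu, hι u]
  have hιau : ι a ≠ u := fun h => haιu (by rw [← h, hι a])
  simp [toggle_apply, swap_apply_of_ne_of_ne hau haιu, hau, hιau]

lemma toggle_apply_eq_self_of_sameCycle (hι : Involutive ι) {σ : Perm α} {r : α → ℕ}
    (hr : ∀ x y, σ.SameCycle x y → r x = r y) {S : Finset α} (hrank : ∀ w ∈ S, r w < r (ι w))
    {u : α} (hsep : ∀ w ∈ S, ¬ σ.SameCycle u w) (hmin : ∀ w ∈ S, r u ≤ r w) {y : α}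
    (hy : σ.SameCycle u y) : hι.toggle S y = y := by
  rw [hι.toggle_apply, if_neg]
  rintro (hyS | hιyS)
  · exact hsep y hyS hy
  · have := hrank _ hιyS
    rw [hι y, ← hr u y hy] at this
    exact this.not_ge (hmin _ hιyS)

end Function.Involutive

namespace Equiv.Perm

variable {α : Type*} [Finite α] [DecidableEq α] {ι : α → α}

/-- The pairs `{w, ι w}` are toggled in order of decreasing rank: the cycle of the newly added `w`
is then still a cycle of the current permutation, while `ι w`, of higher rank, lies on a cycle
already joined to that of `root`. -/
theorem sameCycle_mul_toggle (σ : Perm α) (hι : Involutive ι) (r : α → ℕ)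
    (hr : ∀ x y, σ.SameCycle x y → r x = r y) (T : Finset α) (hrank : ∀ w ∈ T, r w < r (ι w))
    (hsep : ∀ w ∈ T, ∀ w' ∈ T, σ.SameCycle w w' → w = w') (root : α)
    (hcover : ∀ x, σ.SameCycle x root ∨ ∃ w ∈ T, σ.SameCycle x w) (x : α) :
    (σ * hι.toggle T).SameCycle x root := by
  suffices key : ∀ S ⊆ T, (∀ w ∈ T, ∀ c ∈ S, r c < r w → w ∈ S) →
      ∀ x, (σ.SameCycle x root ∨ ∃ w ∈ S, σ.SameCycle x w) → (σ * hι.toggle S).SameCycle x root from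
    key T subset_rfl (fun w hw _ _ _ => hw) x (hcover x)
  intro S
  induction S using Finset.induction_on_min_value r with
  | empty =>
    intro _ _ x hx
    rw [hι.toggle_empty, mul_one]
    simpa using hx
  | insert u S hu hmin ih =>
    intro hST hup x hx
    have huT : u ∈ T := hST (mem_insert_self u S)
    have hST' : S ⊆ T := (subset_insert u S).trans hST
    have hup' : ∀ w ∈ T, ∀ c ∈ S, r c < r w → w ∈ S := fun w hw c hc hcw =>
      (mem_insert.1 (hup w hw c (mem_insert_of_mem hc) hcw)).resolve_left
        (by rintro rfl; exact (hmin c hc).not_gt hcw)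
    have hιu : ι u ∉ S := fun h => by
      have := hrank _ (hST' h)
      rw [hι u] at this
      exact this.not_gt (hrank u huT)
    have hfix : ∀ y, σ.SameCycle u y → hι.toggle S y = y := fun y =>
      hι.toggle_apply_eq_self_of_sameCycle hr (fun w hw => hrank w (hST' hw))
        (fun w hw h => hu (hsep u huT w (hST' hw) h ▸ hw)) hmin
    have hsplit : ¬ (σ * hι.toggle S).SameCycle u (ι u) := fun h =>
      (hrank u huT).ne (hr u _ ((sameCycle_mul_iff_of_forall_apply_eq hfix).1 h))
    have hιu_root : (σ * hι.toggle S).SameCycle (ι u) root := by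
      refine ih hST' hup' _ ((hcover (ι u)).imp_right ?_)
      rintro ⟨w, hwT, hw⟩
      have hlt : r u < r w := (hrank u huT).trans_eq (hr _ _ hw)
      exact ⟨w, (mem_insert.1 (hup w hwT u (mem_insert_self u S) hlt)).resolve_left
        (by rintro rfl; exact hlt.false), hw⟩
    rw [hι.toggle_insert hu hιu, ← mul_assoc]
    rcases hx with hx | ⟨w, hw, hxw⟩
    · exact (ih hST' hup' x (.inl hx)).mul_swap hsplit
    rcases mem_insert.1 hw with rfl | hwS
    · have hxw' := (sameCycle_mul_iff_of_forall_apply_eq hfix).2 hxw.symm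
      exact (hxw'.mul_swap hsplit).symm.trans
        ((sameCycle_mul_swap hsplit).symm.trans (hιu_root.mul_swap hsplit))
    · exact (ih hST' hup' x (.inr ⟨w, hwS, hxw⟩)).mul_swap hsplit

end Equiv.Perm

section ShiftRegister

variable {b m : ℕ}

def IsShiftRegister (P : Perm (Fin (m + 1) → Fin b)) : Prop :=
  ∀ a (i : Fin m), P a i.castSucc = a i.succ

variable {P : Perm (Fin (m + 1) → Fin b)}

lemma IsShiftRegister.pow_apply (hP : IsShiftRegister P) (a : Fin (m + 1) → Fin b) (p i : ℕ)
    (hi : i ≤ m) : (P ^ p) a ⟨i, by omega⟩ = (P ^ (p + i)) a 0 := by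
  induction i generalizing p with
  | zero => rfl
  | succ i ih =>
    have := hP ((P ^ p) a) ⟨i, by omega⟩
    rw [Fin.castSucc_mk, ← Perm.mul_apply, ← pow_succ', ih _ (by omega)] at this
    rw [← Fin.succ_mk _ _ (by omega), ← this, Nat.add_right_comm, Nat.add_assoc]

theorem IsShiftRegister.isDeBruijn (hP : IsShiftRegister P) {x₀ : Fin (m + 1) → Fin b}
    (hcyc : ∀ x, P.SameCycle x₀ x) (hN : 0 < b ^ (m + 1)) :
    isDeBruijn hN (fun k => (P ^ (k : ℕ)) x₀ 0) := by
  have hcard : Fintype.card (Fin (m + 1) → Fin b) = b ^ (m + 1) := by simp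
  have hmod (k : ℕ) : (P ^ (k % b ^ (m + 1))) x₀ = (P ^ k) x₀ := by
    rw [← hcard, Perm.pow_mod_card_apply hcyc]
  have hwindow (p : ℕ) (i : Fin (m + 1)) : (P ^ ((p + i) % b ^ (m + 1))) x₀ 0 = (P ^ p) x₀ i := by
    rw [hmod, hP.pow_apply _ _ _ i.is_le]
  have hinj : Set.InjOn (fun k : ℕ => (P ^ k) x₀) (Set.Iio (b ^ (m + 1))) := by
    rw [← hcard, ← Perm.minimalPeriod_eq_card_of_forall_sameCycle hcyc]
    simpa only [← Perm.iterate_eq_pow] using iterate_injOn_Iio_minimalPeriod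
  intro u
  obtain ⟨k, rfl⟩ := (hcyc u).exists_nat_pow_eq
  refine ⟨⟨k % b ^ (m + 1), Nat.mod_lt _ hN⟩, fun i => ?_, fun p hp => Fin.ext ?_⟩
  · change (P ^ ((k % b ^ (m + 1) + i) % b ^ (m + 1))) x₀ 0 = _
    rw [Nat.mod_add_mod, hwindow]
  · refine hinj p.2 (Nat.mod_lt _ hN) (funext fun i => ?_)
    change (P ^ (p : ℕ)) x₀ i = (P ^ (k % b ^ (m + 1))) x₀ i
    rw [hmod, ← hwindow]
    exact hp i

end ShiftRegister

section Discrepancy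

variable {N : ℕ} (hN : 0 < N) (w : Fin N → Fin 2)

lemma cnt_one_sub_cnt_zero (p L : ℕ) :
    (cnt hN w 1 p L : ℤ) - cnt hN w 0 p L =
      ∑ i ∈ range L, (2 * (w ⟨(p + i) % N, Nat.mod_lt _ hN⟩ : ℤ) - 1) := by
  simp only [cnt, card_filter]
  push_cast
  rw [← sum_sub_distrib]
  refine sum_congr rfl fun i _ => ?_
  generalize w _ = x
  fin_cases x <;> simp

theorem disc_le_of_potential {n : ℕ} (F : ℕ → ℤ)
    (hF : ∀ k, F (k + 1) = F k + 2 * (w ⟨k % N, Nat.mod_lt _ hN⟩ : ℤ) - 1)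
    (hF0 : ∀ k, 0 ≤ F k) (hFn : ∀ k, F k ≤ n) : disc hN w ≤ n := by
  refine Finset.sup_le ?_
  rintro ⟨p, L⟩ -
  have htel : (cnt hN w 1 p L : ℤ) - cnt hN w 0 p L = F (p + L) - F p := by
    rw [cnt_one_sub_cnt_zero]
    induction L with
    | zero => simp
    | succ L ih => rw [sum_range_succ, ih, ← Nat.add_assoc, hF]; ring
  have := hF0 (p + L); have := hFn (p + L); have := hF0 p; have := hFn p
  simp only [htel]
  omega

theorem le_disc_of_isDeBruijn {n : ℕ} (hN : 0 < 2 ^ n) {w : Fin (2 ^ n) → Fin 2}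
    (hw : isDeBruijn hN w) : n ≤ disc hN w := by
  obtain ⟨p, hp, -⟩ := hw fun _ => 1
  have hmem : (p.val, n) ∈ range (2 ^ n) ×ˢ range (2 ^ n + 1) := by
    simp [Nat.lt_two_pow_self.trans (Nat.lt_succ_self _)]
  refine le_trans (le_of_eq ?_) (Finset.le_sup (f := fun q : ℕ × ℕ =>
    ((cnt hN w 1 q.1 q.2 : ℤ) - (cnt hN w 0 q.1 q.2 : ℤ)).natAbs) hmem)
  rw [cnt_one_sub_cnt_zero, sum_congr rfl fun i hi => by rw [hp ⟨i, mem_range.1 hi⟩]]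
  simp

end Discrepancy

namespace CCR

abbrev Word (m : ℕ) := Fin (m + 1) → Fin 2

variable {m : ℕ}

lemma fin_two_add_one_add_one (x : Fin 2) : x + 1 + 1 = x := by fin_cases x <;> rfl

lemma val_add_one_add_val (x : Fin 2) : ((x + 1 : Fin 2) : ℕ) + x = 1 := by fin_cases x <;> rfl

def flipHead (a : Word m) : Word m := Function.update a 0 (a 0 + 1)

lemma flipHead_apply_zero (a : Word m) : flipHead a 0 = a 0 + 1 := by simp [flipHead]

lemma flipHead_apply_of_ne_zero (a : Word m) {i : Fin (m + 1)} (hi : i ≠ 0) :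
    flipHead a i = a i := by simp [flipHead, hi]

lemma flipHead_involutive : Involutive (flipHead (m := m)) := by
  intro a
  ext1 i
  rcases eq_or_ne i 0 with rfl | hi
  · simp [flipHead_apply_zero, fin_two_add_one_add_one]
  · simp [flipHead_apply_of_ne_zero _ hi]

-- `ccr a = (a₁, …, aₘ, a₀ + 1)`: flip the head, then rotate it to the end.
def ccr : Perm (Word m) where
  toFun a := flipHead a ∘ finRotate (m + 1)
  invFun a := flipHead (a ∘ (finRotate (m + 1)).symm)
  left_inv a := by
    simp only [Function.comp_assoc, Equiv.self_comp_symm, Function.comp_id]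
    exact flipHead_involutive a
  right_inv a := by
    simp only [flipHead_involutive _]
    ext
    simp

lemma ccr_apply_castSucc (a : Word m) (i : Fin m) : ccr a i.castSucc = a i.succ := by
  simp [ccr, flipHead_apply_of_ne_zero]

lemma ccr_apply_last (a : Word m) : ccr a (Fin.last m) = a 0 + 1 := by
  simp [ccr, flipHead_apply_zero]

lemma ccr_pow_apply (a : Word m) (k : ℕ) (i : Fin (m + 1)) (h : i + k ≤ m) :
    (ccr ^ k) a i = a ⟨i + k, by omega⟩ := by
  induction k generalizing a with
  | zero => rfl
  | succ k ih =>
    rw [pow_succ, Perm.mul_apply, ih _ (by omega)]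
    exact ccr_apply_castSucc a ⟨i + k, by omega⟩

lemma ccr_pow_apply_zero (a : Word m) (k : ℕ) (hk : k ≤ m) : (ccr ^ k) a 0 = a ⟨k, by omega⟩ := by
  simpa using ccr_pow_apply a k 0 (by simpa using hk)

def complement (a : Word m) : Word m := fun i => a i + 1

lemma complement_complement (a : Word m) : complement (complement a) = a := by
  ext1 i
  exact fin_two_add_one_add_one (a i)

lemma ccr_pow_succ_self (a : Word m) : (ccr ^ (m + 1)) a = complement a := by
  ext1 i
  have hi := i.is_le
  rw [show m + 1 = (m - i) + (i + 1) by omega, pow_add, Perm.mul_apply,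
    ccr_pow_apply _ _ _ (by omega), pow_succ', Perm.mul_apply]
  have : (⟨i + (m - i), by omega⟩ : Fin (m + 1)) = Fin.last m :=
    Fin.ext (by simp only [Fin.val_last]; omega)
  rw [this, ccr_apply_last, ccr_pow_apply_zero _ _ hi]
  rfl

lemma ccr_pow_two_mul : ccr ^ (2 * (m + 1)) = (1 : Perm (Word m)) := by
  ext a : 1
  rw [two_mul, pow_add, Perm.mul_apply, ccr_pow_succ_self, ccr_pow_succ_self,
    complement_complement, Perm.one_apply]

lemma exists_pow_eq_of_sameCycle {a b : Word m} (h : ccr.SameCycle a b) :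
    ∃ k < 2 * (m + 1), (ccr ^ k) a = b := by
  obtain ⟨k, hk, hab⟩ := h.exists_pow_eq'
  exact ⟨k, hk.trans_le (orderOf_le_of_pow_eq_one (by omega) ccr_pow_two_mul), hab⟩

def ones (a : Word m) : ℕ := ∑ i, (a i : ℕ)

lemma ones_flipHead (a : Word m) : ones (flipHead a) + 2 * (a 0 : ℕ) = ones a + 1 := by
  have hrest : ∑ i ∈ univ.erase 0, (flipHead a i : ℕ) = ∑ i ∈ univ.erase 0, (a i : ℕ) :=
    sum_congr rfl fun i hi => by rw [flipHead_apply_of_ne_zero a (ne_of_mem_erase hi)]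
  have := val_add_one_add_val (a 0)
  rw [ones, ones, ← add_sum_erase _ _ (mem_univ 0), ← add_sum_erase _ _ (mem_univ 0), hrest,
    flipHead_apply_zero]
  omega

lemma ones_ccr (a : Word m) : ones (ccr a) + 2 * (a 0 : ℕ) = ones a + 1 := by
  rw [← ones_flipHead]
  congr 1
  exact Equiv.sum_comp (finRotate (m + 1)) (fun i => (flipHead a i : ℕ))

lemma ones_complement (a : Word m) : ones (complement a) + ones a = m + 1 := by
  simp [ones, complement, ← sum_add_distrib, val_add_one_add_val]

lemma ones_le (a : Word m) : ones a ≤ m + 1 := by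
  simpa [ones] using sum_le_card_nsmul univ (fun i => (a i : ℕ)) 1 (fun i _ => Fin.is_le _)

lemma ones_one : ones (1 : Word m) = m + 1 := by simp [ones]

lemma eq_one_of_ones_eq (a : Word m) (h : ones a = m + 1) : a = 1 := by
  rw [← ones_one (m := m)] at h
  have := (sum_eq_sum_iff_of_le (fun i _ => Fin.is_le (a i))).1 h
  ext1 i
  exact Fin.ext (this i (mem_univ i))

lemma exists_eq_one_of_ones_pos (a : Word m) (h : 0 < ones a) : ∃ i, a i = 1 := by
  obtain ⟨i, -, hi⟩ := exists_ne_zero_of_sum_ne_zero h.ne'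
  exact ⟨i, by omega⟩

lemma ones_ccr_pow_flipHead {b : Word m} (hb : b 0 = 1) {k : ℕ} (hk1 : 1 ≤ k) (hk : k ≤ m + 1) :
    ones ((ccr ^ k) (flipHead b)) = ones ((ccr ^ k) b) + 1 := by
  induction k, hk1 using Nat.le_induction with
  | base =>
    have h1 := ones_ccr (flipHead b)
    have h2 := ones_ccr b
    have h3 := ones_flipHead b
    rw [flipHead_apply_zero, hb] at h1
    rw [hb] at h2 h3
    simp only [pow_one]
    omega
  | succ k hk1 ih =>
    have h1 := ones_ccr ((ccr ^ k) (flipHead b))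
    have h2 := ones_ccr ((ccr ^ k) b)
    have hhead : (ccr ^ k) (flipHead b) 0 = (ccr ^ k) b 0 := by
      rw [ccr_pow_apply_zero _ _ (by omega), ccr_pow_apply_zero _ _ (by omega),
        flipHead_apply_of_ne_zero _ (Fin.ne_of_val_ne (show k ≠ 0 by omega))]
    rw [hhead] at h1
    rw [pow_succ', Perm.mul_apply, Perm.mul_apply]
    have := ih (by omega)
    omega

lemma ones_ccr_pow_flipHead_le {b : Word m} (hb : b 0 = 1) {k : ℕ} (hk : k < 2 * (m + 1)) :
    ones ((ccr ^ k) (flipHead b)) ≤ ones ((ccr ^ k) b) + 1 := by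
  rcases Nat.eq_zero_or_pos k with rfl | hk0
  · have := ones_flipHead b
    rw [hb] at this
    simp only [pow_zero, Perm.one_apply]
    omega
  rcases le_or_gt k (m + 1) with hkm | hkm
  · exact (ones_ccr_pow_flipHead hb hk0 hkm).le
  obtain ⟨i, rfl⟩ : ∃ i, k = (m + 1) + i := ⟨k - (m + 1), by omega⟩
  have h1 := ones_complement ((ccr ^ i) (flipHead b))
  have h2 := ones_complement ((ccr ^ i) b)
  have h3 := ones_ccr_pow_flipHead hb (k := i) (by omega) (by omega)
  rw [pow_add, Perm.mul_apply, Perm.mul_apply, ccr_pow_succ_self, ccr_pow_succ_self]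
  omega

def maxOnes (a : Word m) : ℕ := (univ.filter (ccr.SameCycle a)).sup ones

lemma maxOnes_eq_of_sameCycle {a b : Word m} (h : ccr.SameCycle a b) : maxOnes a = maxOnes b := by
  unfold maxOnes
  congr 1
  ext c
  simpa using ⟨h.symm.trans, h.trans⟩

lemma ones_le_maxOnes_of_sameCycle {a b : Word m} (h : ccr.SameCycle a b) : ones b ≤ maxOnes a :=
  le_sup (by simpa using h)

lemma maxOnes_le (a : Word m) : maxOnes a ≤ m + 1 := Finset.sup_le fun b _ => ones_le b

lemma exists_ones_eq_maxOnes (a : Word m) : ∃ c, ccr.SameCycle a c ∧ ones c = maxOnes a := by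
  obtain ⟨c, hc, h⟩ :=
    exists_mem_eq_sup (univ.filter (ccr.SameCycle a)) ⟨a, by simp [Perm.SameCycle.refl]⟩ ones
  exact ⟨c, by simpa using hc, h.symm⟩

lemma sameCycle_one_of_maxOnes_eq {a : Word m} (h : maxOnes a = m + 1) : ccr.SameCycle a 1 := by
  obtain ⟨c, hac, hc⟩ := exists_ones_eq_maxOnes a
  rwa [← eq_one_of_ones_eq c (hc.trans h)]

def IsUpFlip (b : Word m) : Prop := b 0 = 1 ∧ maxOnes (flipHead b) = maxOnes b + 1

lemma maxOnes_flipHead_le {b : Word m} (hb : b 0 = 1) : maxOnes (flipHead b) ≤ maxOnes b + 1 := by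
  refine Finset.sup_le fun y hy => ?_
  obtain ⟨k, hk, rfl⟩ := exists_pow_eq_of_sameCycle (by simpa using hy)
  exact (ones_ccr_pow_flipHead_le hb hk).trans
    (Nat.add_le_add_right (ones_le_maxOnes_of_sameCycle (Perm.sameCycle_pow_self_right _ _ k)) 1)

lemma exists_isUpFlip {a : Word m} (ha : maxOnes a ≤ m) : ∃ b, ccr.SameCycle a b ∧ IsUpFlip b := by
  -- `c` has maximal weight on the cycle and its complement has a `1` at `j`; then
  -- `b := ccr^j (complement c)` starts with `1` and `ccr^(m+1-j) b = c`.
  obtain ⟨c, hac, hc⟩ := exists_ones_eq_maxOnes a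
  obtain ⟨j, hj⟩ := exists_eq_one_of_ones_pos (complement c) (by have := ones_complement c; omega)
  have hb0 : (ccr ^ (j : ℕ)) (complement c) 0 = 1 := by
    rw [ccr_pow_apply_zero _ _ j.is_le]; exact hj
  set b := (ccr ^ (j : ℕ)) (complement c)
  have hab : ccr.SameCycle a b := by
    rw [Perm.sameCycle_pow_right, ← ccr_pow_succ_self]
    exact hac.trans (Perm.sameCycle_pow_self_right _ _ _)
  have hbc : (ccr ^ (m + 1 - j)) b = c := by
    rw [← Perm.mul_apply, ← pow_add, show m + 1 - j + j = m + 1 by omega, ccr_pow_succ_self,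
      complement_complement]
  refine ⟨b, hab, hb0, le_antisymm (maxOnes_flipHead_le hb0) ?_⟩
  have := ones_ccr_pow_flipHead hb0 (k := m + 1 - j) (by omega) (by omega)
  rw [hbc, hc, maxOnes_eq_of_sameCycle hab] at this
  rw [← this]
  exact ones_le_maxOnes_of_sameCycle (Perm.sameCycle_pow_self_right _ _ _)

noncomputable def upFlipRep (a : Word m) : Word m :=
  Classical.epsilon fun b => ccr.SameCycle a b ∧ IsUpFlip b

lemma upFlipRep_spec {a : Word m} (ha : maxOnes a ≤ m) :
    ccr.SameCycle a (upFlipRep a) ∧ IsUpFlip (upFlipRep a) :=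
  Classical.epsilon_spec (exists_isUpFlip ha)

lemma upFlipRep_eq_of_sameCycle {a a' : Word m} (h : ccr.SameCycle a a') :
    upFlipRep a = upFlipRep a' := by
  unfold upFlipRep
  congr 1
  ext b
  exact and_congr_left fun _ => ⟨h.symm.trans, h.trans⟩

noncomputable def upFlips (m : ℕ) : Finset (Word m) :=
  (univ.filter fun a => maxOnes a ≤ m).image upFlipRep

lemma isUpFlip_of_mem_upFlips {b : Word m} (hb : b ∈ upFlips m) : IsUpFlip b := by
  obtain ⟨a, ha, rfl⟩ := mem_image.1 hb
  exact (upFlipRep_spec (mem_filter.1 ha).2).2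

lemma eq_of_mem_upFlips_of_sameCycle {b b' : Word m} (hb : b ∈ upFlips m) (hb' : b' ∈ upFlips m)
    (h : ccr.SameCycle b b') : b = b' := by
  obtain ⟨a, ha, rfl⟩ := mem_image.1 hb
  obtain ⟨a', ha', rfl⟩ := mem_image.1 hb'
  have hsa := (upFlipRep_spec (mem_filter.1 ha).2).1
  have hsa' := (upFlipRep_spec (mem_filter.1 ha').2).1
  exact upFlipRep_eq_of_sameCycle (hsa.trans (h.trans hsa'.symm))

lemma sameCycle_one_or_exists_mem_upFlips (x : Word m) :
    ccr.SameCycle x 1 ∨ ∃ b ∈ upFlips m, ccr.SameCycle x b := by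
  rcases (maxOnes_le x).lt_or_eq with hx | hx
  · have hx' : maxOnes x ≤ m := by omega
    exact .inr ⟨upFlipRep x, mem_image_of_mem _ (mem_filter.2 ⟨mem_univ x, hx'⟩),
      (upFlipRep_spec hx').1⟩
  · exact .inl (sameCycle_one_of_maxOnes_eq hx)

noncomputable def joined (m : ℕ) : Perm (Word m) := ccr * flipHead_involutive.toggle (upFlips m)

lemma joined_sameCycle_one (x : Word m) : (joined m).SameCycle x 1 :=
  Perm.sameCycle_mul_toggle ccr flipHead_involutive maxOnes (fun _ _ => maxOnes_eq_of_sameCycle)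
    (upFlips m) (fun b hb => by rw [(isUpFlip_of_mem_upFlips hb).2]; omega)
    (fun _ hb _ hb' => eq_of_mem_upFlips_of_sameCycle hb hb') 1
    sameCycle_one_or_exists_mem_upFlips x

lemma isShiftRegister_joined : IsShiftRegister (joined m) := by
  intro a i
  rw [joined, Perm.mul_apply, ccr_apply_castSucc, Involutive.toggle_apply]
  split_ifs
  · exact flipHead_apply_of_ne_zero _ i.succ_ne_zero
  · rfl

def potential (a : Word m) : ℤ := maxOnes a - ones a

lemma potential_nonneg (a : Word m) : 0 ≤ potential a := by
  have := ones_le_maxOnes_of_sameCycle (Perm.SameCycle.refl ccr a)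
  simp only [potential]
  omega

lemma potential_le (a : Word m) : potential a ≤ m + 1 := by
  have := maxOnes_le a
  simp only [potential]
  omega

lemma potential_ccr (a : Word m) : potential (ccr a) = potential a + 2 * (a 0 : ℕ) - 1 := by
  have h1 := ones_ccr a
  have h2 := maxOnes_eq_of_sameCycle (Perm.sameCycle_apply_right.2 (Perm.SameCycle.refl ccr a))
  simp only [potential, ← h2]
  omega

lemma potential_flipHead {b : Word m} (hb : IsUpFlip b) :
    potential (flipHead b) = potential b + 2 := by
  have := ones_flipHead b
  rw [hb.1] at this
  simp only [potential, hb.2]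
  omega

lemma potential_joined (a : Word m) :
    potential (joined m a) = potential a + 2 * (a 0 : ℕ) - 1 := by
  rw [joined, Perm.mul_apply, Involutive.toggle_apply]
  split_ifs with h
  · rw [potential_ccr, flipHead_apply_zero]
    rcases h with h | h
    · have hb := isUpFlip_of_mem_upFlips h
      rw [potential_flipHead hb, hb.1]
      omega
    · have hb := isUpFlip_of_mem_upFlips h
      have := potential_flipHead hb
      rw [flipHead_involutive a] at this
      have ha : a 0 = 0 := by
        rw [← flipHead_involutive a, flipHead_apply_zero, hb.1]
        rfl
      rw [ha]
      omega
  · exact potential_ccr a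

end CCR

open CCR

theorem stmt18 (n : ℕ) (hn : 1 ≤ n) (hN : 0 < 2 ^ n) :
    (∃ w : Fin (2 ^ n) → Fin 2, isDeBruijn (b := 2) hN w ∧ disc hN w = n) ∧
    (∀ w : Fin (2 ^ n) → Fin 2, isDeBruijn (b := 2) hN w → n ≤ disc hN w) := by
  obtain ⟨m, rfl⟩ : ∃ m, n = m + 1 := ⟨n - 1, by omega⟩
  have hcyc (x : Word m) : (joined m).SameCycle 1 x := (joined_sameCycle_one x).symm
  have hdb := isShiftRegister_joined.isDeBruijn hcyc hN
  refine ⟨⟨_, hdb, le_antisymm ?_ (le_disc_of_isDeBruijn hN hdb)⟩,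
    fun _ => le_disc_of_isDeBruijn hN⟩
  refine disc_le_of_potential hN _ (fun k => potential ((joined m ^ k) 1)) (fun k => ?_)
    (fun _ => potential_nonneg _) (fun _ => by exact_mod_cast potential_le _)
  have hmod := Perm.pow_mod_card_apply hcyc k
  simp only [Fintype.card_fun, Fintype.card_fin] at hmod
  rw [pow_succ' (joined m) k, Perm.mul_apply, potential_joined]
  simp only [hmod]
end
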